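/- Let $\nu$ be a measure on $\mathbb{R}^d$ with $\nu(\{0\})=0$, and define $\mathcal{A}_2(\nu)(B) = \int_{\mathbb{R}^d \setminus \{0\}} \int_0^{|x|} \frac{2}{\pi}(|x|^2 - r^2)^{-1/2} 1_B(r x/|x|)\,dr\,\nu(dx)$. Then $\mathcal{A}_2(\nu)$ is a L\'evy measure if and only if $\nu$ is a L\'evy measure, i.e. $\int_{\mathbb{R}^d}(1\wedge |x|^2)\,\nu(dx) < \infty$. -/

import Mathlib

/-!
For `x ≠ 0` the kernel of `𝒜₂` pushes the arcsine law `a₂(r; |x|) dr` on `(0, |x|)` forward onto the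
segment from `0` to `x`, so `∫ (1 ∧ |y|²) 𝒜₂(ν)(dy) = ∫ ν(dx) ∫₀^{|x|} a₂(r; |x|) (1 ∧ r²) dr`.
The inner integral is comparable to `1 ∧ |x|²`. From below, restrict to `r > |x|/2`, where
`a₂(r; s) ≥ 2/(π s)` and `1 ∧ r² ≥ (1 ∧ s²)/4`. From above, `a₂(r; s) ≤ (2/π) (s (s - r))^{-1/2}`,
whose integral over `(0, s)` is `4/π`. The atom of `ν` at `0` contributes to neither side.
-/

open MeasureTheory Real Set ENNReal

variable {d : ℕ}

/-- The arcsine transformation `𝒜ₖ` of a measure on `ℝᵈ` (for `k = 1, 2`):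
`𝒜ₖ(ν)(B) = ∫ ν(dx) ∫₀^{|x|^{k/2}} (2/π)(|x|^k - r²)^{-1/2} 1_B(r x/|x|) dr`. -/
noncomputable def arcsineT (k : ℝ) (ν : Measure (EuclideanSpace ℝ (Fin d))) :
    Measure (EuclideanSpace ℝ (Fin d)) :=
  (ν.restrict {(0 : EuclideanSpace ℝ (Fin d))}ᶜ).bind fun x =>
    Measure.map (fun r : ℝ => (r / ‖x‖) • x)
      ((volume.restrict (Set.Ioo (0 : ℝ) (‖x‖ ^ (k / 2)))).withDensity
        (fun r => ENNReal.ofReal (2 / Real.pi * (‖x‖ ^ k - r ^ 2) ^ (-(1/2) : ℝ))))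

namespace MeasureTheory.Measure

variable {α β : Type*} [MeasurableSpace α] [MeasurableSpace β]

theorem measurable_map_withDensity {γ : Type*} [MeasurableSpace γ] {μ : Measure γ}
    [SFinite μ] {T : α × γ → β} (hT : Measurable T) {f : α × γ → ℝ≥0∞} (hf : Measurable f) :
    Measurable fun a => (μ.withDensity fun r => f (a, r)).map fun r => T (a, r) := by
  refine Measure.measurable_of_measurable_coe _ fun s hs => ?_
  have hTa : ∀ a, Measurable fun r => T (a, r) := fun a => hT.comp measurable_prodMk_left
  simp_rw [Measure.map_apply (hTa _) hs, withDensity_apply _ (hTa _ hs),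
    ← lintegral_indicator (hTa _ hs)]
  exact (hf.indicator (hT hs)).lintegral_prod_right'

theorem lintegral_bind_lt_top_iff_of_le_of_le {μ : Measure α} {κ : α → Measure β}
    (hκ : Measurable κ) {g : β → ℝ≥0∞} (hg : Measurable g) {f : α → ℝ≥0∞} {c C : ℝ≥0∞}
    (hc : c ≠ 0) (hC : C ≠ ⊤) (hf : ∀ᵐ a ∂μ, c * f a ≤ ∫⁻ b, g b ∂κ a ∧ ∫⁻ b, g b ∂κ a ≤ C * f a) :
    ∫⁻ b, g b ∂μ.bind κ < ⊤ ↔ ∫⁻ a, f a ∂μ < ⊤ := by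
  rw [lintegral_bind hκ.aemeasurable hg.aemeasurable]
  constructor
  · intro h
    refine ENNReal.lt_top_of_mul_ne_top_right ?_ hc
    refine ne_top_of_le_ne_top h.ne ((lintegral_const_mul_le c f).trans ?_)
    exact lintegral_mono_ae (hf.mono fun a ha => ha.1)
  · intro h
    calc ∫⁻ a, ∫⁻ b, g b ∂κ a ∂μ ≤ ∫⁻ a, C * f a ∂μ := lintegral_mono_ae (hf.mono fun a ha => ha.2)
      _ = C * ∫⁻ a, f a ∂μ := lintegral_const_mul' C f hC
      _ < ⊤ := ENNReal.mul_lt_top hC.lt_top h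

end MeasureTheory.Measure

noncomputable def arcsineDensity (s r : ℝ) : ℝ := 2 / π * (s ^ 2 - r ^ 2) ^ (-(1/2) : ℝ)

section ArcsineDensity

variable {s r : ℝ}

theorem two_div_pi_div_le_arcsineDensity (hr : 0 ≤ r) (hrs : r < s) :
    2 / π / s ≤ arcsineDensity s r := by
  have hs : 0 < s := hr.trans_lt hrs
  have hss : (s ^ 2) ^ (-(1/2) : ℝ) = s⁻¹ := by
    rw [← Real.rpow_natCast, ← Real.rpow_mul hs.le]; norm_num [Real.rpow_neg_one]
  rw [arcsineDensity, div_eq_mul_inv, ← hss]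
  exact mul_le_mul_of_nonneg_left (Real.rpow_le_rpow_of_nonpos (by nlinarith)
    (by nlinarith : s ^ 2 - r ^ 2 ≤ s ^ 2) (by norm_num)) (by positivity)

theorem arcsineDensity_le (hr : 0 ≤ r) (hrs : r < s) :
    arcsineDensity s r ≤ 2 / π * s ^ (-(1/2) : ℝ) * (s - r) ^ (-(1/2) : ℝ) := by
  have hs : 0 < s := hr.trans_lt hrs
  rw [arcsineDensity, mul_assoc, ← Real.mul_rpow hs.le (by linarith)]
  exact mul_le_mul_of_nonneg_left (Real.rpow_le_rpow_of_nonpos (mul_pos hs (by linarith))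
    (by nlinarith : s * (s - r) ≤ s ^ 2 - r ^ 2) (by norm_num)) (by positivity)

theorem lintegral_Ioo_sub_rpow_neg_half (hs : 0 < s) :
    ∫⁻ r in Ioo 0 s, ENNReal.ofReal ((s - r) ^ (-(1/2) : ℝ)) =
      ENNReal.ofReal (2 * s ^ (1/2 : ℝ)) := by
  have hint : IntervalIntegrable (fun r : ℝ => (s - r) ^ (-(1/2) : ℝ)) volume 0 s := by
    simpa using (intervalIntegral.intervalIntegrable_rpow' (a := 0) (b := s)
      (by norm_num : (-1 : ℝ) < -(1/2))).comp_sub_left s |>.symm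
  rw [← ofReal_integral_eq_lintegral_ofReal
      ((intervalIntegrable_iff_integrableOn_Ioo_of_le hs.le).mp hint)
      ((ae_restrict_iff' measurableSet_Ioo).2 (ae_of_all _ fun r hr =>
        Real.rpow_nonneg (by linarith [hr.2]) _)),
    ← integral_Ioc_eq_integral_Ioo, ← intervalIntegral.integral_of_le hs.le,
    intervalIntegral.integral_comp_sub_left (fun u : ℝ => u ^ (-(1/2) : ℝ)) s,
    sub_self, sub_zero, integral_rpow (Or.inl (by norm_num)), Real.zero_rpow (by norm_num)]
  congr 1
  norm_num
  ring

theorem ofReal_mul_min_one_sq_le_lintegral_arcsineDensity (hs : 0 < s) :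
    ENNReal.ofReal (1 / (4 * π)) * ENNReal.ofReal (min 1 (s ^ 2)) ≤
      ∫⁻ r in Ioo 0 s, ENNReal.ofReal (arcsineDensity s r) * ENNReal.ofReal (min 1 (r ^ 2)) := by
  calc ENNReal.ofReal (1 / (4 * π)) * ENNReal.ofReal (min 1 (s ^ 2))
      = ∫⁻ _ in Ioo (s / 2) s, ENNReal.ofReal (2 / π / s) * ENNReal.ofReal (min 1 (s ^ 2) / 4) := by
        rw [setLIntegral_const, Real.volume_Ioo, ← ENNReal.ofReal_mul (by positivity),
          ← ENNReal.ofReal_mul (by positivity), ← ENNReal.ofReal_mul (by positivity)]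
        congr 1
        field_simp
        ring
    _ ≤ ∫⁻ r in Ioo (s / 2) s,
          ENNReal.ofReal (arcsineDensity s r) * ENNReal.ofReal (min 1 (r ^ 2)) := by
        refine setLIntegral_mono (by unfold arcsineDensity; fun_prop) fun r hr => ?_
        have hr0 : 0 ≤ r := by linarith [hr.1]
        gcongr
        · exact two_div_pi_div_le_arcsineDensity hr0 hr.2
        · exact le_min (by linarith [min_le_left 1 (s ^ 2)])
            (by nlinarith [min_le_right 1 (s ^ 2), hr.1])
    _ ≤ ∫⁻ r in Ioo 0 s, ENNReal.ofReal (arcsineDensity s r) * ENNReal.ofReal (min 1 (r ^ 2)) :=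
        lintegral_mono_set (Ioo_subset_Ioo_left (by linarith))

theorem lintegral_arcsineDensity_le_ofReal_mul_min_one_sq (hs : 0 < s) :
    ∫⁻ r in Ioo 0 s, ENNReal.ofReal (arcsineDensity s r) * ENNReal.ofReal (min 1 (r ^ 2)) ≤
      ENNReal.ofReal (4 / π) * ENNReal.ofReal (min 1 (s ^ 2)) := by
  have hss : s ^ (-(1/2) : ℝ) * s ^ (1/2 : ℝ) = 1 := by rw [← Real.rpow_add hs]; norm_num
  calc ∫⁻ r in Ioo 0 s, ENNReal.ofReal (arcsineDensity s r) * ENNReal.ofReal (min 1 (r ^ 2))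
      ≤ ∫⁻ r in Ioo 0 s, ENNReal.ofReal (2 / π * s ^ (-(1/2) : ℝ) * min 1 (s ^ 2)) *
          ENNReal.ofReal ((s - r) ^ (-(1/2) : ℝ)) := by
        refine setLIntegral_mono (by fun_prop) fun r hr => ?_
        have hsr : 0 ≤ (s - r) ^ (-(1/2) : ℝ) := Real.rpow_nonneg (by linarith [hr.2]) _
        rw [← ENNReal.ofReal_mul' (by positivity), ← ENNReal.ofReal_mul' hsr]
        refine ENNReal.ofReal_le_ofReal ?_
        calc arcsineDensity s r * min 1 (r ^ 2)
            ≤ 2 / π * s ^ (-(1/2) : ℝ) * (s - r) ^ (-(1/2) : ℝ) * min 1 (s ^ 2) :=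
              mul_le_mul (arcsineDensity_le hr.1.le hr.2)
                (min_le_min_left 1 (by nlinarith [hr.1, hr.2])) (by positivity) (by positivity)
          _ = 2 / π * s ^ (-(1/2) : ℝ) * min 1 (s ^ 2) * (s - r) ^ (-(1/2) : ℝ) := by ring
    _ = ENNReal.ofReal (4 / π) * ENNReal.ofReal (min 1 (s ^ 2)) := by
        rw [lintegral_const_mul' _ _ ENNReal.ofReal_ne_top, lintegral_Ioo_sub_rpow_neg_half hs,
          ← ENNReal.ofReal_mul' (by positivity), ← ENNReal.ofReal_mul' (by positivity)]
        congr 1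
        linear_combination (4 / π * min 1 (s ^ 2)) * hss

end ArcsineDensity

section ArcsineKernel

variable (k : ℝ) (x : EuclideanSpace ℝ (Fin d))

noncomputable def arcsineKernel : Measure (EuclideanSpace ℝ (Fin d)) :=
  Measure.map (fun r : ℝ => (r / ‖x‖) • x)
    ((volume.restrict (Ioo (0 : ℝ) (‖x‖ ^ (k / 2)))).withDensity
      fun r => ENNReal.ofReal (2 / π * (‖x‖ ^ k - r ^ 2) ^ (-(1/2) : ℝ)))

theorem arcsineT_eq_bind (ν : Measure (EuclideanSpace ℝ (Fin d))) :
    arcsineT k ν = (ν.restrict {0}ᶜ).bind (arcsineKernel k) := rfl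

theorem measurable_arcsineKernel : Measurable (arcsineKernel (d := d) k) := by
  have hIoo : MeasurableSet {p : EuclideanSpace ℝ (Fin d) × ℝ | p.2 ∈ Ioo 0 (‖p.1‖ ^ (k / 2))} :=
    (measurableSet_lt measurable_const measurable_snd).inter
      (measurableSet_lt measurable_snd (by fun_prop))
  convert Measure.measurable_map_withDensity (μ := volume)
    (T := fun p : EuclideanSpace ℝ (Fin d) × ℝ => (p.2 / ‖p.1‖) • p.1) (by fun_prop)
    (f := {p | p.2 ∈ Ioo 0 (‖p.1‖ ^ (k / 2))}.indicator
      fun p => ENNReal.ofReal (2 / π * (‖p.1‖ ^ k - p.2 ^ 2) ^ (-(1/2) : ℝ)))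
    ((Measurable.ennreal_ofReal (by fun_prop)).indicator hIoo) using 2 with x
  rw [arcsineKernel, ← withDensity_indicator measurableSet_Ioo]
  rfl

variable {x}

theorem lintegral_comp_norm_arcsineKernel_two {h : ℝ → ℝ≥0∞} (hh : Measurable h) (hx : x ≠ 0) :
    ∫⁻ y, h ‖y‖ ∂arcsineKernel 2 x =
      ∫⁻ r in Ioo 0 ‖x‖, ENNReal.ofReal (arcsineDensity ‖x‖ r) * h r := by
  have hx' : 0 < ‖x‖ := norm_pos_iff.mpr hx
  rw [arcsineKernel, lintegral_map (by fun_prop) (by fun_prop),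
    lintegral_withDensity_eq_lintegral_mul _ (Measurable.ennreal_ofReal (by fun_prop))
      (by fun_prop), div_self two_ne_zero, Real.rpow_one]
  refine setLIntegral_congr_fun measurableSet_Ioo fun r hr => ?_
  rw [Pi.mul_apply, norm_smul, norm_div, norm_norm, Real.norm_of_nonneg hr.1.le,
    div_mul_cancel₀ _ hx'.ne', arcsineDensity, Real.rpow_two]

end ArcsineKernel

theorem arcsineT_two_levyMeasure_iff_general (ν : Measure (EuclideanSpace ℝ (Fin d))) :
    (∫⁻ y, ENNReal.ofReal (min 1 (‖y‖ ^ 2)) ∂(arcsineT 2 ν) < ⊤) ↔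
      (∫⁻ x, ENNReal.ofReal (min 1 (‖x‖ ^ 2)) ∂ν < ⊤) := by
  have hbounds : ∀ᵐ x ∂ν.restrict {0}ᶜ,
      ENNReal.ofReal (1 / (4 * π)) * ENNReal.ofReal (min 1 (‖x‖ ^ 2)) ≤
          ∫⁻ y, ENNReal.ofReal (min 1 (‖y‖ ^ 2)) ∂arcsineKernel 2 x ∧
        ∫⁻ y, ENNReal.ofReal (min 1 (‖y‖ ^ 2)) ∂arcsineKernel 2 x ≤
          ENNReal.ofReal (4 / π) * ENNReal.ofReal (min 1 (‖x‖ ^ 2)) := by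
    filter_upwards [ae_restrict_mem (measurableSet_singleton 0).compl] with x hx
    have hx' : 0 < ‖x‖ := norm_pos_iff.mpr hx
    rw [lintegral_comp_norm_arcsineKernel_two (h := fun r => ENNReal.ofReal (min 1 (r ^ 2)))
      (by fun_prop) hx]
    exact ⟨ofReal_mul_min_one_sq_le_lintegral_arcsineDensity hx',
      lintegral_arcsineDensity_le_ofReal_mul_min_one_sq hx'⟩
  have hsupport : Function.support (fun x : EuclideanSpace ℝ (Fin d) =>
      ENNReal.ofReal (min 1 (‖x‖ ^ 2))) ⊆ {0}ᶜ := by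
    rintro x hx rfl
    simp at hx
  rw [arcsineT_eq_bind, Measure.lintegral_bind_lt_top_iff_of_le_of_le (measurable_arcsineKernel 2)
    (by fun_prop) (ENNReal.ofReal_pos.mpr (by positivity)).ne' ENNReal.ofReal_ne_top hbounds,
    setLIntegral_eq_of_support_subset hsupport]

theorem arcsineT_two_levyMeasure_iff (ν : Measure (EuclideanSpace ℝ (Fin d)))
    (hν : ν {0} = 0) :
    (∫⁻ y, ENNReal.ofReal (min 1 (‖y‖ ^ 2)) ∂(arcsineT 2 ν) < ⊤) ↔
      (∫⁻ x, ENNReal.ofReal (min 1 (‖x‖ ^ 2)) ∂ν < ⊤) :=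
  arcsineT_two_levyMeasure_iff_general ν
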